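/- arXiv:1610.06159 — 3 statements merged into one kernel-verified Lean document; each statement's English description precedes it below -/
import Mathlib

section
/- Let ν be a Borel probability measure on the unit circle ∂𝔻 ⊂ ℂ and let C ≥ 0 be a constant such that ∫_{∂𝔻} log|z − w| dν(w) ≥ −C for every z ∈ ∂𝔻. Then for every arc (connected subset) A ⊆ ∂𝔻 with 0 < Leb(A) < 1/2, one has ν(A) ≤ (C + log 2)/log(1/Leb(A)). In particular, ν is log-Hölder continuous: there is a constant c > 0 with ν(A) ≤ −c·(log Leb(A))⁻¹ for every arc A with Leb(A) < 1/2. (This is the quantitative content of the Craig–Simon theorem for the density of states of an ergodic family of phased CMV operators, whose Thouless formula gives ∫ log|z−w| dν(w) = L(z) + log ρ_∞ ≥ log ρ_∞, i.e. the hypothesis with C = log(1/ρ_∞).) -/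
noncomputable section
open scoped ENNReal
open MeasureTheory

/-- Arc-length measure on the unit circle ∂𝔻 ⊆ ℂ, the pushforward of Lebesgue
measure on [0, 2π) under τ ↦ e^{iτ}. -/
def circleLeb : Measure ℂ :=
  Measure.map (fun τ : ℝ => Complex.exp (Complex.I * τ))
    (volume.restrict (Set.Ico 0 (2 * Real.pi)))

/-!
Fix `z` on the circle and split the potential `∫ log ‖z - w‖ dν(w) ≥ -C` over a set `B` and its
complement. Off `B` the integrand is at most `log 2`, since chords have length at most `2`; on a
set `B` of points within distance `δ` of `z` it is at most `log δ`. Hence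
`ν(B) · log (1/δ) ≤ C + log 2`. An arc `A` cannot have a chord longer than its length `ℓ`, so it
lies in the ball of radius `ℓ` about any of its points, which gives the bound. The one subtlety is
that `Real.log 0 = 0`, so the centre `z` must carry no atom; atoms are excluded by the same estimate
applied at points `z ≠ z₀` arbitrarily close to `z₀`.
-/

open Complex Set Metric

lemma measurable_exp_I_mul : Measurable fun τ : ℝ => exp (I * τ) := by fun_prop

lemma periodic_exp_I_mul : Function.Periodic (fun τ : ℝ => exp (I * τ)) (2 * Real.pi) := by
  intro τ
  simpa [mul_add, mul_comm _ I, mul_assoc] using exp_periodic (I * τ)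

lemma circleLeb_apply {S : Set ℂ} (hS : MeasurableSet S) :
    circleLeb S = volume ((fun τ : ℝ => exp (I * τ)) ⁻¹' S ∩ Ico 0 (2 * Real.pi)) := by
  rw [circleLeb, Measure.map_apply measurable_exp_I_mul hS,
    Measure.restrict_apply (measurable_exp_I_mul hS)]

instance : IsFiniteMeasure circleLeb := by
  have : Fact (volume (Ico 0 (2 * Real.pi)) < ∞) := ⟨measure_Ico_lt_top⟩
  unfold circleLeb
  infer_instance

lemma circleLeb_sphere : circleLeb (sphere 0 1) = ENNReal.ofReal (2 * Real.pi) := by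
  have : (fun τ : ℝ => exp (I * τ)) ⁻¹' sphere 0 1 = univ := by
    ext τ; simp [norm_exp_I_mul_ofReal]
  rw [circleLeb_apply isClosed_sphere.measurableSet, this, univ_inter, Real.volume_Ico, sub_zero]

-- The preimage of `S` is `2π`-periodic, so it meets every period interval in the same measure.
lemma circleLeb_eq_volume_inter_Ioc {S : Set ℂ} (hS : MeasurableSet S) (a : ℝ) :
    circleLeb S = volume ((fun τ : ℝ => exp (I * τ)) ⁻¹' S ∩ Ioc a (a + 2 * Real.pi)) := by
  have hP := measurable_exp_I_mul hS
  rw [circleLeb_apply hS, measure_congr ((ae_eq_refl _).inter Ico_ae_eq_Ioc)]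
  have h := (isAddFundamentalDomain_Ioc Real.two_pi_pos 0 volume).measure_set_eq
    (isAddFundamentalDomain_Ioc Real.two_pi_pos a volume) hP ?_
  · rwa [zero_add] at h
  rintro ⟨_, n, rfl⟩
  ext τ
  have := periodic_exp_I_mul.int_mul n τ
  simp_all [add_comm]

lemma ofReal_le_circleLeb_image_Icc {a b : ℝ} (hab : b - a ≤ 2 * Real.pi) :
    ENNReal.ofReal (b - a) ≤ circleLeb ((fun τ : ℝ => exp (I * τ)) '' Icc a b) := by
  have hS : MeasurableSet ((fun τ : ℝ => exp (I * τ)) '' Icc a b) :=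
    (isCompact_Icc.image (by fun_prop)).isClosed.measurableSet
  rw [circleLeb_eq_volume_inter_Ioc hS a, ← Real.volume_Ioc]
  exact measure_mono fun τ hτ =>
    ⟨mem_image_of_mem _ (Ioc_subset_Icc_self hτ), hτ.1, by linarith [hτ.2]⟩

lemma norm_exp_I_mul_sub_exp_I_mul_le (s t : ℝ) :
    ‖exp (I * s) - exp (I * t)‖ ≤ |s - t| := by
  simpa [circleMap, dist_eq, mul_comm, Real.dist_eq] using
    (lipschitzWith_circleMap 0 1).dist_le_mul s t

lemma exp_I_mul_arg {z : ℂ} (hz : ‖z‖ = 1) : exp (I * arg z) = z := by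
  simpa [hz, mul_comm] using norm_mul_exp_arg_mul_I z

lemma div_mem_slitPlane_of_ne_neg {a q : ℂ} (ha : ‖a‖ = 1) (hq : ‖q‖ = 1) (hne : a ≠ -q) :
    a / q ∈ slitPlane := by
  have hq0 : q ≠ 0 := norm_ne_zero_iff.mp (by simp [hq])
  have ha0 : a ≠ 0 := norm_ne_zero_iff.mp (by simp [ha])
  refine mem_slitPlane_iff_arg.mpr ⟨fun hπ => hne ?_, div_ne_zero ha0 hq0⟩
  have h := exp_I_mul_arg (z := a / q) (by simp [ha, hq])
  rw [hπ, mul_comm, exp_pi_mul_I] at h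
  field_simp at h
  linear_combination -h

lemma exists_mem_sphere_notMem_of_circleLeb_lt {A : Set ℂ}
    (hA : circleLeb A < ENNReal.ofReal (2 * Real.pi)) : ∃ p ∈ sphere (0 : ℂ) 1, p ∉ A := by
  by_contra! h
  exact (measure_mono h).not_gt (circleLeb_sphere ▸ hA)

-- Cut the circle at a point `p ∉ A`: on `A` the angle `θ` measured from `-p` is continuous, so
-- it maps `A` onto an interval, and the whole arc between two points of `A` lies in `A`.
lemma subset_closedBall_circleLeb {A : Set ℂ} (hA : A ⊆ sphere 0 1) (hconn : IsPreconnected A)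
    (hlt : circleLeb A < ENNReal.ofReal (2 * Real.pi)) {z : ℂ} (hz : z ∈ A) :
    A ⊆ closedBall z (circleLeb A).toReal := by
  obtain ⟨p, hp, hpA⟩ := exists_mem_sphere_notMem_of_circleLeb_lt hlt
  have hq : ‖-p‖ = 1 := by simpa using hp
  have hnorm : ∀ a ∈ A, ‖a‖ = 1 := fun a ha => by simpa using hA ha
  set θ : ℂ → ℝ := fun a => arg (-p) + arg (a / -p)
  have hθ : ∀ a ∈ A, exp (I * θ a) = a := fun a ha => by
    have hp0 : -p ≠ 0 := norm_ne_zero_iff.mp (by simp [hq])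
    rw [ofReal_add, mul_add, exp_add, exp_I_mul_arg hq, exp_I_mul_arg (by simp [hnorm a ha, hq]),
      mul_div_cancel₀ _ hp0]
  have hcont : ContinuousOn θ A := fun a ha =>
    (continuousAt_const.add ((continuousAt_arg (div_mem_slitPlane_of_ne_neg (hnorm a ha) hq
      (by rintro rfl; simp_all))).comp (f := (· / -p)) (by fun_prop))).continuousWithinAt
  intro w hw
  have harc : (fun τ : ℝ => exp (I * τ)) '' uIcc (θ z) (θ w) ⊆ A := by
    rintro _ ⟨τ, hτ, rfl⟩
    obtain ⟨a, ha, rfl⟩ := (hconn.image θ hcont).ordConnected.uIcc_subset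
      (mem_image_of_mem θ hz) (mem_image_of_mem θ hw) hτ
    simpa only [hθ a ha] using ha
  have hlen : |θ w - θ z| ≤ 2 * Real.pi := by
    have hw' := abs_le.mp (abs_arg_le_pi (w / -p))
    have hz' := abs_le.mp (abs_arg_le_pi (z / -p))
    rw [add_sub_add_left_eq_sub, abs_le]
    constructor <;> linarith
  have hmeas : ENNReal.ofReal |θ w - θ z| ≤ circleLeb A := by
    refine le_trans ?_ (measure_mono harc)
    rw [← max_sub_min_eq_abs]
    exact ofReal_le_circleLeb_image_Icc ((max_sub_min_eq_abs _ _).trans_le hlen)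
  rw [mem_closedBall, dist_eq, ← hθ w hw, ← hθ z hz]
  calc ‖exp (I * θ w) - exp (I * θ z)‖ ≤ |θ w - θ z| := norm_exp_I_mul_sub_exp_I_mul_le _ _
    _ ≤ (circleLeb A).toReal := (ENNReal.ofReal_le_iff_le_toReal (measure_ne_top _ _)).mp hmeas

lemma exists_mem_sphere_near {z₀ : ℂ} (hz₀ : z₀ ∈ sphere (0 : ℂ) 1) {ε : ℝ} (hε : 0 < ε) :
    ∃ z ∈ sphere (0 : ℂ) 1, 0 < ‖z - z₀‖ ∧ ‖z - z₀‖ ≤ ε := by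
  set t := min ε 1
  have ht : 0 < t := lt_min hε one_pos
  have hz₀' : ‖z₀‖ = 1 := by simpa using hz₀
  have hdist : ‖z₀ * exp (I * t) - z₀‖ = ‖exp (I * t) - 1‖ := by
    rw [← mul_sub_one, norm_mul, hz₀', one_mul]
  refine ⟨z₀ * exp (I * t), by simp [hz₀', norm_exp_I_mul_ofReal], ?_, ?_⟩
  · have : 0 < Real.sin (t / 2) :=
      Real.sin_pos_of_pos_of_lt_pi (by positivity)
        (by linarith [min_le_right ε 1, Real.pi_gt_three])
    rw [hdist, norm_exp_I_mul_ofReal_sub_one]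
    exact norm_pos_iff.mpr (mul_ne_zero two_ne_zero this.ne')
  · rw [hdist]
    exact Real.norm_exp_I_mul_ofReal_sub_one_le.trans (by simp [abs_of_pos ht, t])

def LogPotentialBoundedBelow (ν : Measure ℂ) (C : ℝ) : Prop :=
  ∀ z ∈ sphere (0 : ℂ) 1, Integrable (fun w => Real.log ‖z - w‖) ν ∧ -C ≤ ∫ w, Real.log ‖z - w‖ ∂ν

section Potential

variable {ν : Measure ℂ} [IsProbabilityMeasure ν] {C : ℝ}

lemma setIntegral_log_norm_sub_le_log_two (hsupp : ν (sphere 0 1)ᶜ = 0) {z : ℂ}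
    (hz : z ∈ sphere (0 : ℂ) 1) (hint : Integrable (fun w => Real.log ‖z - w‖) ν) (T : Set ℂ) :
    ∫ w in T, Real.log ‖z - w‖ ∂ν ≤ Real.log 2 := by
  have hbound : ∀ᵐ w ∂ν, Real.log ‖z - w‖ ≤ Real.log 2 := by
    filter_upwards [measure_eq_zero_iff_ae_notMem.mp hsupp] with w hw
    have h2 : ‖z - w‖ ≤ 2 := (norm_sub_le z w).trans (by simp_all [one_add_one_eq_two])
    rcases (norm_nonneg (z - w)).eq_or_lt with h0 | hpos
    · rw [← h0, Real.log_zero]; positivity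
    · exact Real.log_le_log hpos h2
  calc ∫ w in T, Real.log ‖z - w‖ ∂ν ≤ ∫ _ in T, Real.log 2 ∂ν :=
        setIntegral_mono_ae hint.integrableOn (integrableOn_const (measure_ne_top _ _)) hbound
    _ = ν.real T * Real.log 2 := by rw [setIntegral_const, smul_eq_mul]
    _ ≤ Real.log 2 := mul_le_of_le_one_left (by positivity) measureReal_le_one

lemma measureReal_mul_log_inv_le (hsupp : ν (sphere 0 1)ᶜ = 0) {z : ℂ}
    (hz : z ∈ sphere (0 : ℂ) 1) (hint : Integrable (fun w => Real.log ‖z - w‖) ν)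
    (hlow : -C ≤ ∫ w, Real.log ‖z - w‖ ∂ν) {B : Set ℂ} (hB : MeasurableSet B) {δ : ℝ}
    (hδ : ∀ᵐ w ∂ν, w ∈ B → Real.log ‖z - w‖ ≤ Real.log δ) :
    ν.real B * Real.log (1 / δ) ≤ C + Real.log 2 := by
  have hin : ∫ w in B, Real.log ‖z - w‖ ∂ν ≤ ν.real B * Real.log δ := by
    simpa [setIntegral_const] using setIntegral_mono_ae_restrict hint.integrableOn
      (integrableOn_const (measure_ne_top _ _)) ((ae_restrict_iff' hB).mpr hδ)
  have hout := setIntegral_log_norm_sub_le_log_two hsupp hz hint Bᶜ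
  rw [← integral_add_compl hB hint] at hlow
  rw [one_div, Real.log_inv]
  linarith

lemma measure_singleton_eq_zero (hsupp : ν (sphere 0 1)ᶜ = 0)
    (hpot : LogPotentialBoundedBelow ν C) {z₀ : ℂ} (hz₀ : z₀ ∈ sphere (0 : ℂ) 1) : ν {z₀} = 0 := by
  by_contra hne
  have hm : 0 < ν.real {z₀} := ENNReal.toReal_pos hne (measure_ne_top _ _)
  set ε := Real.exp (-(C + Real.log 2 + 1) / ν.real {z₀})
  obtain ⟨z, hz, hpos, hle⟩ := exists_mem_sphere_near hz₀ (Real.exp_pos _ : 0 < ε)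
  have h := measureReal_mul_log_inv_le hsupp hz (hpot z hz).1 (hpot z hz).2
    (measurableSet_singleton z₀) (δ := ε) (ae_of_all _ fun w hw => by
      rw [hw]; exact Real.log_le_log hpos hle)
  rw [one_div, Real.log_inv, Real.log_exp, neg_div, neg_neg, mul_div_cancel₀ _ hm.ne'] at h
  linarith

lemma measureReal_closedBall_mul_log_inv_le (hsupp : ν (sphere 0 1)ᶜ = 0)
    (hpot : LogPotentialBoundedBelow ν C) {z : ℂ} (hz : z ∈ sphere (0 : ℂ) 1) (δ : ℝ) :
    ν.real (closedBall z δ) * Real.log (1 / δ) ≤ C + Real.log 2 := by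
  refine measureReal_mul_log_inv_le hsupp hz (hpot z hz).1 (hpot z hz).2
    measurableSet_closedBall ?_
  filter_upwards [measure_eq_zero_iff_ae_notMem.mp (measure_singleton_eq_zero hsupp hpot hz)]
    with w hw hwB
  rw [← dist_eq, dist_comm]
  exact Real.log_le_log (dist_pos.mpr (by simpa [eq_comm] using hw)) hwB

lemma measureReal_mul_log_inv_circleLeb_le (hsupp : ν (sphere 0 1)ᶜ = 0)
    (hpot : LogPotentialBoundedBelow ν C) {A : Set ℂ} (hA : A ⊆ sphere 0 1)
    (hconn : IsPreconnected A) (hA1 : circleLeb A ≤ 1) {z : ℂ} (hz : z ∈ A) :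
    ν.real A * Real.log (1 / (circleLeb A).toReal) ≤ C + Real.log 2 := by
  have hlog : 0 ≤ Real.log (1 / (circleLeb A).toReal) := by
    rw [one_div, Real.log_inv, neg_nonneg]
    exact Real.log_nonpos ENNReal.toReal_nonneg
      (ENNReal.toReal_le_of_le_ofReal zero_le_one (by simpa using hA1))
  have hball := subset_closedBall_circleLeb hA hconn
    (hA1.trans_lt (ENNReal.one_lt_ofReal.mpr (by linarith [Real.pi_gt_three]))) hz
  calc ν.real A * Real.log (1 / (circleLeb A).toReal)
      ≤ ν.real (closedBall z (circleLeb A).toReal) * Real.log (1 / (circleLeb A).toReal) :=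
        mul_le_mul_of_nonneg_right (measureReal_mono hball) hlog
    _ ≤ C + Real.log 2 := measureReal_closedBall_mul_log_inv_le hsupp hpot (hA hz) _

lemma measure_eq_zero_of_circleLeb_eq_zero (hsupp : ν (sphere 0 1)ᶜ = 0)
    (hpot : LogPotentialBoundedBelow ν C) {A : Set ℂ} (hA : A ⊆ sphere 0 1)
    (hconn : IsPreconnected A) (hA1 : circleLeb A ≤ 1) (h0 : (circleLeb A).toReal = 0) :
    ν A = 0 := by
  rcases A.eq_empty_or_nonempty with rfl | ⟨z, hz⟩
  · exact measure_empty
  have hball := subset_closedBall_circleLeb hA hconn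
    (hA1.trans_lt (ENNReal.one_lt_ofReal.mpr (by linarith [Real.pi_gt_three]))) hz
  rw [h0, closedBall_zero] at hball
  exact measure_mono_null hball (measure_singleton_eq_zero hsupp hpot (hA hz))

end Potential

/-- quantitative Craig–Simon: log-Hölder continuity. If ν is a Borel
probability measure on ∂𝔻 with ∫ log|z−w| dν(w) ≥ −C for all z ∈ ∂𝔻, then for every arc
A with 0 < Leb(A) < 1/2 one has ν(A) ≤ (C + log 2)/log(1/Leb(A)); in particular ν is
log-Hölder continuous. -/
theorem logHolder_of_log_potential_lower_bound
    (ν : Measure ℂ) [IsProbabilityMeasure ν]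
    (hsupp : ν (Metric.sphere (0 : ℂ) 1)ᶜ = 0)
    (C : ℝ) (hC : 0 ≤ C)
    (hpot : ∀ z ∈ Metric.sphere (0 : ℂ) 1,
      Integrable (fun w => Real.log (‖z - w‖)) ν ∧
        -C ≤ ∫ w, Real.log (‖z - w‖) ∂ν) :
    (∀ A : Set ℂ, A ⊆ Metric.sphere (0 : ℂ) 1 → IsPreconnected A →
        0 < circleLeb A → circleLeb A < ENNReal.ofReal (1 / 2) →
        (ν A).toReal ≤ (C + Real.log 2) / Real.log (1 / (circleLeb A).toReal)) ∧
    ∃ c : ℝ, 0 < c ∧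
      ∀ A : Set ℂ, A ⊆ Metric.sphere (0 : ℂ) 1 → IsPreconnected A →
        circleLeb A < ENNReal.ofReal (1 / 2) →
        (ν A).toReal ≤ -c * (Real.log ((circleLeb A).toReal))⁻¹ := by
  have hhalf : ENNReal.ofReal (1 / 2) ≤ 1 := ENNReal.ofReal_le_one.mpr (by norm_num)
  have hbound : ∀ A : Set ℂ, A ⊆ sphere 0 1 → IsPreconnected A →
      circleLeb A < ENNReal.ofReal (1 / 2) → 0 < (circleLeb A).toReal →
      ν.real A ≤ (C + Real.log 2) / Real.log (1 / (circleLeb A).toReal) := by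
    intro A hA hconn hlt hpos
    have hℓ : (circleLeb A).toReal < 1 := (ENNReal.toReal_lt_of_lt_ofReal hlt).trans (by norm_num)
    obtain ⟨z, hz⟩ := nonempty_of_measure_ne_zero (ENNReal.toReal_pos_iff.mp hpos).1.ne'
    rw [le_div_iff₀ (Real.log_pos ((one_lt_div hpos).mpr hℓ))]
    exact measureReal_mul_log_inv_circleLeb_le hsupp hpot hA hconn (hlt.le.trans hhalf) hz
  refine ⟨fun A hA hconn hpos hlt =>
    hbound A hA hconn hlt (ENNReal.toReal_pos hpos.ne' (measure_ne_top _ _)),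
    C + Real.log 2, by positivity, fun A hA hconn hlt => ?_⟩
  rcases (ENNReal.toReal_nonneg (a := circleLeb A)).eq_or_lt with h0 | hpos
  · rw [← h0, Real.log_zero, inv_zero, mul_zero, measure_eq_zero_of_circleLeb_eq_zero hsupp hpot hA
      hconn (hlt.le.trans hhalf) h0.symm, ENNReal.toReal_zero]
  · have h := hbound A hA hconn hlt hpos
    rwa [one_div, Real.log_inv, div_neg, div_eq_mul_inv, ← neg_mul] at h
end
end

section
/- Let α, β ∈ 𝔻 = {z ∈ ℂ : |z| < 1} and λ, μ ∈ ∂𝔻, and for τ ∈ ℝ define T(τ) = P(α,λ;e^{iτ})·Q(β,μ;e^{iτ}). Then with ζ = e^{iτ}: T(τ) = (ρ_α·ρ_β)⁻¹·[[conj(α)·β + ζ/(μλ), −conj(α)·μ/ζ − conj(β)/λ],[−βλ − αζ/μ, μλ/ζ + α·conj(β)]], and T(τ)⁻¹·T'(τ) = (i/ρ_β²)·[[1, −conj(β)·μ/ζ],[β·ζ/μ, −1]], where T' denotes the entrywise derivative of T with respect to τ, ρ_α = √(1−|α|²), ρ_β = √(1−|β|²). -/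
/-!
Since `P(α, λ; z)` does not depend on `z`, `T⁻¹ T' = Q⁻¹ Q'` with `Q = Q(β, μ; e^{iτ})`.
Differentiating `Q` entrywise and multiplying out shows `Q' = Q C` for the claimed matrix `C`,
and `det Q = -1`, so `Q⁻¹ Q' = C`.
-/

noncomputable section
open scoped ENNReal
open Complex Matrix

/-- ρ = √(1 − |α|²). -/
def rho (w : ℂ) : ℝ := Real.sqrt (1 - ‖w‖ ^ 2)

/-- The Gesztesy–Zinchenko transfer matrix P(α, λ; z). -/
def Pmat (α lam z : ℂ) : Matrix (Fin 2) (Fin 2) ℂ :=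
  ((rho α : ℂ))⁻¹ • !![-((starRingEnd ℂ) α), lam⁻¹; lam, -α]

/-- The Gesztesy–Zinchenko transfer matrix Q(α, λ; z). -/
def Qmat (α lam z : ℂ) : Matrix (Fin 2) (Fin 2) ℂ :=
  ((rho α : ℂ))⁻¹ • !![-α, lam * z⁻¹; lam⁻¹ * z, -((starRingEnd ℂ) α)]

/-- Y(n; z): the one-step transfer matrix. -/
def Ymat (a lam : ℤ → ℂ) (z : ℂ) (n : ℤ) : Matrix (Fin 2) (Fin 2) ℂ :=
  if Odd n then Pmat (a n) (lam n) z else Qmat (a n) (lam n) z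

/-- Z(n, 0; z) = Y(n−1; z) ⋯ Y(0; z). -/
def Zmat (a lam : ℤ → ℂ) (z : ℂ) : ℕ → Matrix (Fin 2) (Fin 2) ℂ
  | 0 => 1
  | n + 1 => Ymat a lam z n * Zmat a lam z n

/-- Frobenius (Hilbert–Schmidt) norm of a 2×2 complex matrix. -/
def matNorm (M : Matrix (Fin 2) (Fin 2) ℂ) : ℝ :=
  Real.sqrt (∑ i, ∑ j, ‖M i j‖ ^ 2)

/-- The group SU(1,1) of 2×2 complex matrices. -/
def SU11 : Set (Matrix (Fin 2) (Fin 2) ℂ) :=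
  {M | M.det = 1 ∧ Mᴴ * !![1, 0; 0, -1] * M = !![1, 0; 0, -1]}

/-- The rotation matrix R_θ = diag(e^{iθ}, e^{−iθ}). -/
def Rtheta (θ : ℝ) : Matrix (Fin 2) (Fin 2) ℂ :=
  !![Complex.exp (θ * Complex.I), 0; 0, Complex.exp (-θ * Complex.I)]

/-- 𝕂: the diagonal subgroup of SU(1,1). -/
def Kset : Set (Matrix (Fin 2) (Fin 2) ℂ) := {R | ∃ θ : ℝ, R = Rtheta θ}

/-- The iTrace of a 2×2 complex matrix. -/
def iTr (M : Matrix (Fin 2) (Fin 2) ℂ) : ℂ := (M 0 0 - M 1 1) / (2 * Complex.I)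

/-- M_ξ, the standard SU(1,1) element moving 0 to ξ. -/
def Mxi (ξ : ℂ) : Matrix (Fin 2) (Fin 2) ℂ :=
  ((Real.sqrt (1 - ‖ξ‖ ^ 2) : ℂ))⁻¹ • !![1, ξ; (starRingEnd ℂ) ξ, 1]

open scoped ComplexConjugate

lemma ofReal_rho_sq {w : ℂ} (hw : ‖w‖ ≤ 1) : ((rho w : ℝ) : ℂ) ^ 2 = 1 - w * conj w := by
  rw [← ofReal_pow, rho, Real.sq_sqrt (by nlinarith [norm_nonneg w]), mul_conj,
    normSq_eq_norm_sq]
  push_cast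
  ring

lemma one_sub_mul_conj_ne_zero {w : ℂ} (hw : ‖w‖ < 1) : 1 - w * conj w ≠ 0 := by
  rw [mul_conj, ← ofReal_one, ← ofReal_sub, ofReal_ne_zero, normSq_eq_norm_sq]
  nlinarith [norm_nonneg w]

lemma rho_ne_zero {w : ℂ} (hw : ‖w‖ < 1) : ((rho w : ℝ) : ℂ) ≠ 0 :=
  ofReal_ne_zero.2 (Real.sqrt_pos.2 (by nlinarith [norm_nonneg w])).ne'

lemma Pmat_mul_Qmat (α β lam mu w z : ℂ) :
    Pmat α lam w * Qmat β mu z = ((rho α * rho β : ℝ) : ℂ)⁻¹ •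
      !![conj α * β + z / (mu * lam), -(conj α * mu / z) - conj β / lam;
        -(β * lam) - α * z / mu, mu * lam / z + α * conj β] := by
  rw [Pmat, Qmat, smul_mul_smul_comm, ofReal_mul, mul_inv]
  congr 1
  ext i j
  fin_cases i <;> fin_cases j <;> simp [Matrix.mul_apply] <;> ring

lemma det_Pmat {α lam z : ℂ} (hα : ‖α‖ < 1) (hlam : lam ≠ 0) : (Pmat α lam z).det = -1 := by
  rw [Pmat, det_smul, det_fin_two_of, Fintype.card_fin, inv_pow, ofReal_rho_sq hα.le]
  have := one_sub_mul_conj_ne_zero hα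
  field_simp
  ring

lemma det_Qmat {β mu z : ℂ} (hβ : ‖β‖ < 1) (hmu : mu ≠ 0) (hz : z ≠ 0) : (Qmat β mu z).det = -1 := by
  rw [Qmat, det_smul, det_fin_two_of, Fintype.card_fin, inv_pow, ofReal_rho_sq hβ.le]
  have := one_sub_mul_conj_ne_zero hβ
  field_simp
  ring

lemma hasDerivAt_exp_I_mul (τ : ℝ) :
    HasDerivAt (fun t : ℝ => exp (I * t)) (I * exp (I * τ)) τ := by
  simpa [mul_comm] using ((hasDerivAt_id τ).ofReal_comp.const_mul I).cexp

lemma hasDerivAt_inv_exp_I_mul (τ : ℝ) :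
    HasDerivAt (fun t : ℝ => (exp (I * t))⁻¹) (-(I * (exp (I * τ))⁻¹)) τ := by
  simp only [← exp_neg]
  simpa [mul_comm] using ((hasDerivAt_id τ).ofReal_comp.const_mul I).neg.cexp

lemma hasDerivAt_Qmat_exp_apply (β mu : ℂ) (τ : ℝ) (i j : Fin 2) :
    HasDerivAt (fun t : ℝ => Qmat β mu (exp (I * t)) i j)
      ((((rho β : ℝ) : ℂ)⁻¹ • !![0, -(I * mu / exp (I * τ)); I * exp (I * τ) / mu, 0]) i j) τ := by
  fin_cases i <;> fin_cases j <;>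
    simp only [Qmat, Matrix.smul_apply, smul_eq_mul, Fin.zero_eta, Fin.mk_one, of_apply, cons_val',
      cons_val_zero, cons_val_one, empty_val', cons_val_fin_one,]
  · simpa using hasDerivAt_const τ (((rho β : ℝ) : ℂ)⁻¹ * -β)
  · exact (((hasDerivAt_inv_exp_I_mul τ).const_mul mu).const_mul _).congr_deriv (by ring)
  · exact (((hasDerivAt_exp_I_mul τ).const_mul mu⁻¹).const_mul _).congr_deriv (by ring)
  · simpa using hasDerivAt_const τ (((rho β : ℝ) : ℂ)⁻¹ * -conj β)

lemma Qmat_mul_eq {β mu ζ : ℂ} (hβ : ‖β‖ < 1) (hmu : mu ≠ 0) (hζ : ζ ≠ 0) :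
    Qmat β mu ζ * (I / ((rho β : ℝ) : ℂ) ^ 2) • !![1, -(conj β * mu / ζ); β * ζ / mu, -1] =
      ((rho β : ℝ) : ℂ)⁻¹ • !![0, -(I * mu / ζ); I * ζ / mu, 0] := by
  have := rho_ne_zero hβ
  have := one_sub_mul_conj_ne_zero hβ
  rw [ofReal_rho_sq hβ.le]
  ext i j
  fin_cases i <;> fin_cases j <;> simp [Qmat, Matrix.mul_apply] <;> field_simp <;> ring

lemma deriv_const_mul_matrix_apply {𝕜 𝔸 m n k : Type*} [NontriviallyNormedField 𝕜]
    [NormedCommRing 𝔸] [NormedAlgebra 𝕜 𝔸] [Fintype m] (A : Matrix n m 𝔸)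
    {F : 𝕜 → Matrix m k 𝔸} {F' : Matrix m k 𝔸} {τ : 𝕜}
    (hF : ∀ i j, HasDerivAt (fun t => F t i j) (F' i j) τ) :
    (Matrix.of fun i j => deriv (fun t => (A * F t) i j) τ) = A * F' := by
  ext i j
  simp only [Matrix.of_apply, Matrix.mul_apply]
  exact (HasDerivAt.fun_sum fun l _ => (hF l j).const_mul (A i l)).deriv

/-- explicit form of T = PQ and of T⁻¹T′. -/
theorem Tmat_and_logarithmic_derivative
    (α β lam mu : ℂ) (hα : ‖α‖ < 1) (hβ : ‖β‖ < 1)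
    (hlam : ‖lam‖ = 1) (hmu : ‖mu‖ = 1)
    (T : ℝ → Matrix (Fin 2) (Fin 2) ℂ)
    (hT : ∀ t : ℝ, T t =
      Pmat α lam (Complex.exp (Complex.I * t)) * Qmat β mu (Complex.exp (Complex.I * t)))
    (τ : ℝ) (ζ : ℂ) (hζ : ζ = Complex.exp (Complex.I * τ)) :
    T τ = ((rho α * rho β : ℝ) : ℂ)⁻¹ •
        !![(starRingEnd ℂ) α * β + ζ / (mu * lam),
            -((starRingEnd ℂ) α * mu / ζ) - (starRingEnd ℂ) β / lam;
          -(β * lam) - α * ζ / mu,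
            mu * lam / ζ + α * (starRingEnd ℂ) β] ∧
    (T τ)⁻¹ * (Matrix.of fun i j => deriv (fun t => T t i j) τ) =
      (Complex.I / (rho β : ℂ) ^ 2) •
        !![1, -((starRingEnd ℂ) β * mu / ζ); β * ζ / mu, -1] := by
  -- P does not depend on the spectral parameter.
  obtain rfl : T = fun t : ℝ => Pmat α lam 1 * Qmat β mu (exp (I * t)) := funext hT
  subst hζ
  have hlam0 : lam ≠ 0 := ne_zero_of_norm_ne_zero (hlam.symm ▸ one_ne_zero)
  have hmu0 : mu ≠ 0 := ne_zero_of_norm_ne_zero (hmu.symm ▸ one_ne_zero)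
  have hdet : (Pmat α lam 1 * Qmat β mu (exp (I * τ))).det = 1 := by
    rw [det_mul, det_Pmat hα hlam0, det_Qmat hβ hmu0 (exp_ne_zero _), neg_one_mul, neg_neg]
  beta_reduce
  refine ⟨Pmat_mul_Qmat α β lam mu 1 _, ?_⟩
  rw [deriv_const_mul_matrix_apply _ (hasDerivAt_Qmat_exp_apply β mu τ), ← Qmat_mul_eq hβ hmu0 (exp_ne_zero _),
    ← mul_assoc (Pmat α lam 1), nonsing_inv_mul_cancel_left _ _ (by rw [hdet]; exact isUnit_one)]
end
end

section
/- (Eigenvalues of periodic truncations.) Let (α,λ) be q-periodic with q even, |α_n| < 1, |λ_n| = 1, let n ∈ ℤ₊ and N = nq. Let ℰ^{per}_N = ℒ^{per}·ℳ^{per} be the unitary operator on ℂ^{ℤ/Nℤ} obtained by imposing periodic boundary conditions: ℒ^{per} is the direct sum of the 2×2 blocks Θ(α_{2j},λ_{2j}) = λ_{2j}·[[conj(α_{2j}), ρ_{2j}],[ρ_{2j}, −α_{2j}]] acting on the coordinates {2j mod N, 2j+1 mod N} for 0 ≤ j < N/2, and ℳ^{per} is the direct sum of the blocks Θ(α_{2j+1},λ_{2j+1})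 acting on the coordinates {2j+1 mod N, 2j+2 mod N} for 0 ≤ j < N/2. Then w ∈ ℂ∖{0} is an eigenvalue of ℰ^{per}_N if and only if 1 is an eigenvalue of Φ(w)ⁿ, where Φ(w) = Z(q,0;w) is the monodromy matrix; equivalently, if and only if Δ(w) = 2·cos(2πj/n) for some integer 0 ≤ j ≤ n/2. -/
noncomputable section
open scoped ENNReal
open Complex Matrix

/-- ℒ^per: the direct sum of the blocks Θ(α_{2j}, λ_{2j}) acting on coordinates
{2j mod N, 2j+1 mod N} of ℂ^{ℤ/Nℤ}, 0 ≤ j < N/2. -/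
def LperMat (a lam : ℤ → ℂ) (N : ℕ) : Matrix (ZMod N) (ZMod N) ℂ :=
  ∑ j ∈ Finset.range (N / 2),
    ((lam (2 * j) * (starRingEnd ℂ) (a (2 * j))) •
        Matrix.single ((2 * j : ℕ) : ZMod N) ((2 * j : ℕ) : ZMod N) 1 +
      (lam (2 * j) * (rho (a (2 * j)) : ℂ)) •
        Matrix.single ((2 * j : ℕ) : ZMod N) ((2 * j + 1 : ℕ) : ZMod N) 1 +
      (lam (2 * j) * (rho (a (2 * j)) : ℂ)) •
        Matrix.single ((2 * j + 1 : ℕ) : ZMod N) ((2 * j : ℕ) : ZMod N) 1 +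
      (-(lam (2 * j) * a (2 * j))) •
        Matrix.single ((2 * j + 1 : ℕ) : ZMod N) ((2 * j + 1 : ℕ) : ZMod N) 1)

/-- ℳ^per: the direct sum of the blocks Θ(α_{2j+1}, λ_{2j+1}) acting on coordinates
{2j+1 mod N, 2j+2 mod N} of ℂ^{ℤ/Nℤ}, 0 ≤ j < N/2. -/
def MperMat (a lam : ℤ → ℂ) (N : ℕ) : Matrix (ZMod N) (ZMod N) ℂ :=
  ∑ j ∈ Finset.range (N / 2),
    ((lam (2 * j + 1) * (starRingEnd ℂ) (a (2 * j + 1))) •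
        Matrix.single ((2 * j + 1 : ℕ) : ZMod N) ((2 * j + 1 : ℕ) : ZMod N) 1 +
      (lam (2 * j + 1) * (rho (a (2 * j + 1)) : ℂ)) •
        Matrix.single ((2 * j + 1 : ℕ) : ZMod N) ((2 * j + 2 : ℕ) : ZMod N) 1 +
      (lam (2 * j + 1) * (rho (a (2 * j + 1)) : ℂ)) •
        Matrix.single ((2 * j + 2 : ℕ) : ZMod N) ((2 * j + 1 : ℕ) : ZMod N) 1 +
      (-(lam (2 * j + 1) * a (2 * j + 1))) •
        Matrix.single ((2 * j + 2 : ℕ) : ZMod N) ((2 * j + 2 : ℕ) : ZMod N) 1)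

/-- ℰ^per_N = ℒ^per · ℳ^per, the truncation of ℰ to ℂ^{ℤ/Nℤ} with periodic boundary
conditions. -/
def EperMat (a lam : ℤ → ℂ) (N : ℕ) [NeZero N] : Matrix (ZMod N) (ZMod N) ℂ :=
  LperMat a lam N * MperMat a lam N

/-!
Write an eigenvector equation `ℒℳu = wu` as the pair `ℒv = wu`, `ℳu = v`. Each `2 × 2` block of
`ℒ` (acting on `{2j, 2j+1}`) or of `ℳ` (acting on `{2j+1, 2j+2}`) can be solved for the next pair
`(u_{m+1}, v_{m+1})` in terms of `(u_m, v_m)`, and the solution is exactly one Gesztesy–Zinchenko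
step `Y(m; w)`: `Q` for even `m`, `P` for odd `m`. Going once around `ℤ/Nℤ`, eigenvectors of
`ℰ^per_N` for `w` correspond to fixed vectors of `Z(N, 0; w)`, which is `Φ(w)ⁿ` by periodicity.
Since `det Y = -1` and `q` is even, `det Φ = 1`, so the eigenvalues `μ` of `Φ` solve
`μ² - Δμ + 1 = 0`. By spectral mapping, `Φⁿ` has eigenvalue `1` iff some `μ = e^{2πik/n}`,
i.e. iff `Δ = 2cos(2πk/n)`; replacing `k` by `n - k` gives `2k ≤ n`.
-/

theorem Matrix.mem_spectrum_iff_exists_mulVec_eq_smul {n K : Type*} [Fintype n] [DecidableEq n]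
    [Field K] (M : Matrix n n K) (μ : K) :
    μ ∈ spectrum K M ↔ ∃ v ≠ 0, M *ᵥ v = μ • v := by
  rw [spectrum.mem_iff, Matrix.isUnit_iff_isUnit_det, isUnit_iff_ne_zero, not_not,
    ← Matrix.exists_mulVec_eq_zero_iff]
  simp only [Algebra.algebraMap_eq_smul_one, Matrix.sub_mulVec, Matrix.smul_mulVec,
    Matrix.one_mulVec, sub_eq_zero, eq_comm]

theorem Matrix.mem_spectrum_fin_two_iff {K : Type*} [Field K] (M : Matrix (Fin 2) (Fin 2) K)
    (μ : K) : μ ∈ spectrum K M ↔ μ ^ 2 - M.trace * μ + M.det = 0 := by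
  rw [spectrum.mem_iff, Matrix.isUnit_iff_isUnit_det, isUnit_iff_ne_zero, not_not,
    Matrix.det_fin_two, Matrix.det_fin_two, Matrix.trace_fin_two]
  simp only [Matrix.sub_apply, Matrix.algebraMap_matrix_apply, Algebra.algebraMap_self,
    RingHom.id_apply, ↓reduceIte, Fin.isValue, zero_ne_one, one_ne_zero, zero_sub, mul_neg,
    neg_mul, neg_neg]
  constructor <;> intro h <;> linear_combination h

theorem Complex.exp_mul_I_sq_sub_mul_add_one_eq_zero_iff (θ : ℝ) (t : ℂ) :
    exp (θ * I) ^ 2 - t * exp (θ * I) + 1 = 0 ↔ t = (2 * Real.cos θ : ℝ) := by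
  have hexp : exp (θ * I) * exp (-θ * I) = 1 := by rw [← exp_add]; simp
  have hcos : ((2 * Real.cos θ : ℝ) : ℂ) = exp (θ * I) + exp (-θ * I) := by
    push_cast; exact two_cos _
  rw [hcos]
  constructor
  · intro h
    linear_combination -exp (-θ * I) * h + (exp (θ * I) - t) * hexp
  · intro h
    linear_combination -exp (θ * I) * h - hexp

theorem one_mem_spectrum_pow_iff_exists_trace_eq_two_cos {Φ : Matrix (Fin 2) (Fin 2) ℂ}
    (hdet : Φ.det = 1) {n : ℕ} (hn : 0 < n) :
    1 ∈ spectrum ℂ (Φ ^ n) ↔ ∃ k < n, Φ.trace = (2 * Real.cos (2 * Real.pi * k / n) : ℝ) := by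
  have : NeZero n := ⟨hn.ne'⟩
  have hζ := Complex.isPrimitiveRoot_exp n hn.ne'
  have hpow (k : ℕ) : Complex.exp (2 * Real.pi * Complex.I / n) ^ k =
      Complex.exp ((2 * Real.pi * k / n : ℝ) * Complex.I) := by
    rw [← Complex.exp_nat_mul]; push_cast; ring_nf
  rw [spectrum.map_pow_of_pos Φ hn]
  constructor
  · rintro ⟨μ, hμ, hμn⟩
    obtain ⟨k, hk, rfl⟩ := hζ.eq_pow_of_pow_eq_one hμn
    rw [Matrix.mem_spectrum_fin_two_iff, hdet, hpow,
      Complex.exp_mul_I_sq_sub_mul_add_one_eq_zero_iff] at hμ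
    exact ⟨k, hk, hμ⟩
  · rintro ⟨k, -, hk⟩
    refine ⟨_ ^ k, ?_, show (_ ^ k) ^ n = 1 by rw [pow_right_comm, hζ.pow_eq_one, one_pow]⟩
    rw [Matrix.mem_spectrum_fin_two_iff, hdet, hpow,
      Complex.exp_mul_I_sq_sub_mul_add_one_eq_zero_iff]
    exact hk

theorem exists_lt_two_cos_iff_exists_two_mul_le {n : ℕ} (hn : 0 < n) (t : ℂ) :
    (∃ k < n, t = (2 * Real.cos (2 * Real.pi * k / n) : ℝ)) ↔
      ∃ j : ℕ, 2 * j ≤ n ∧ t = (2 * Real.cos (2 * Real.pi * j / n) : ℝ) := by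
  constructor
  · rintro ⟨k, hk, rfl⟩
    rcases le_or_gt (2 * k) n with hkn | hkn
    · exact ⟨k, hkn, rfl⟩
    refine ⟨n - k, by omega, ?_⟩
    have harg : 2 * Real.pi * ((n : ℝ) - k) / n = 2 * Real.pi - 2 * Real.pi * k / n := by
      field_simp
    rw [Nat.cast_sub hk.le, harg, Real.cos_two_pi_sub]
  · rintro ⟨j, hj, rfl⟩
    exact ⟨j, by omega, rfl⟩

theorem forall_lt_iff_forall_two_mul {N : ℕ} (hN : Even N) {P : ℕ → Prop} :
    (∀ m < N, P m) ↔ (∀ j : Fin (N / 2), P (2 * j)) ∧ ∀ j : Fin (N / 2), P (2 * j + 1) := by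
  obtain ⟨K, rfl⟩ := hN
  refine ⟨fun h => ⟨fun j => h _ (by omega), fun j => h _ (by omega)⟩, ?_⟩
  rintro ⟨heven, hodd⟩ m hm
  obtain ⟨j, rfl | rfl⟩ := Nat.even_or_odd' m
  · exact heven ⟨j, by omega⟩
  · exact hodd ⟨j, by omega⟩

theorem ZMod.natCast_injOn_Ico (N c : ℕ) :
    Set.InjOn (Nat.cast : ℕ → ZMod N) (Set.Ico c (c + N)) := by
  intro x hx y hy hxy
  refine ((ZMod.natCast_eq_natCast_iff x y N).mp hxy).eq_of_abs_lt ?_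
  simp only [Set.mem_Ico] at hx hy
  rw [abs_sub_lt_iff]
  omega

section Blocks

variable {ι m n R : Type*} [Fintype m] [DecidableEq n] [Semiring R]

def blockAt (p : m → n) (B : Matrix m m R) : Matrix n n R :=
  ∑ r, ∑ s, B r s • Matrix.single (p r) (p s) 1

variable [Fintype n]

theorem blockAt_mulVec_apply (p : m → n) (B : Matrix m m R) (v : n → R) (k : n) :
    (blockAt p B *ᵥ v) k = ∑ r, if p r = k then (B *ᵥ (v ∘ p)) r else 0 := by
  rw [blockAt, Matrix.sum_mulVec, Finset.sum_apply]
  refine Finset.sum_congr rfl fun r _ => ?_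
  rw [Matrix.sum_mulVec, Finset.sum_apply]
  simp only [Matrix.smul_mulVec, Matrix.single_mulVec_eq, Pi.smul_apply, Pi.single_apply,
    smul_eq_mul]
  rcases eq_or_ne (p r) k with rfl | h
  · simp [Matrix.mulVec, dotProduct]
  · simp [h, h.symm]

theorem sum_blockAt_mulVec_eq_iff [Fintype ι] (p : ι → m → n)
    (hp : (Function.uncurry p).Bijective) (B : ι → Matrix m m R) (v u : n → R) :
    (∑ j, blockAt (p j) (B j)) *ᵥ v = u ↔ ∀ j, B j *ᵥ (v ∘ p j) = u ∘ p j := by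
  have hblock (j : ι) (r : m) :
      ((∑ j, blockAt (p j) (B j)) *ᵥ v) (p j r) = (B j *ᵥ (v ∘ p j)) r := by
    simp only [Matrix.sum_mulVec, Finset.sum_apply, blockAt_mulVec_apply]
    rw [← Fintype.sum_prod_type', Fintype.sum_eq_single (j, r), if_pos rfl]
    exact fun x hx => if_neg (hp.1.ne hx)
  simp only [funext_iff, hp.2.forall, Prod.forall, Function.uncurry_apply_pair, hblock,
    Function.comp_apply]

end Blocks

theorem rho_pos {α : ℂ} (hα : ‖α‖ < 1) : 0 < rho α := by
  apply Real.sqrt_pos.mpr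
  nlinarith [norm_nonneg α]

theorem rho_sq {α : ℂ} (hα : ‖α‖ ≤ 1) : ((rho α : ℂ)) ^ 2 = 1 - α * starRingEnd ℂ α := by
  rw [Complex.mul_conj, Complex.normSq_eq_norm_sq, ← Complex.ofReal_pow, rho,
    Real.sq_sqrt (by nlinarith [norm_nonneg α])]
  push_cast; ring

section Transfer

variable {a lam : ℤ → ℂ} {z : ℂ}

theorem Ymat_two_mul (k : ℤ) : Ymat a lam z (2 * k) = Qmat (a (2 * k)) (lam (2 * k)) z :=
  if_neg (Int.not_odd_iff_even.mpr (even_two_mul k))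

theorem Ymat_two_mul_add_one (k : ℤ) :
    Ymat a lam z (2 * k + 1) = Pmat (a (2 * k + 1)) (lam (2 * k + 1)) z :=
  if_pos (odd_two_mul_add_one k)

theorem det_Ymat (ha : ∀ m, ‖a m‖ < 1) (hz : z ≠ 0) (hl : ∀ m, lam m ≠ 0) (m : ℤ) :
    (Ymat a lam z m).det = -1 := by
  have hρ : (rho (a m) : ℂ) ≠ 0 := by exact_mod_cast (rho_pos (ha m)).ne'
  have hρ2 := rho_sq (ha m).le
  have := hl m
  unfold Ymat Pmat Qmat
  split_ifs <;>
  · rw [Matrix.det_smul, Matrix.det_fin_two_of, Fintype.card_fin]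
    field_simp
    linear_combination hρ2

theorem det_Zmat (ha : ∀ m, ‖a m‖ < 1) (hz : z ≠ 0) (hl : ∀ m, lam m ≠ 0) (m : ℕ) :
    (Zmat a lam z m).det = (-1) ^ m := by
  induction m with
  | zero => simp [Zmat]
  | succ m ih => rw [Zmat, Matrix.det_mul, ih, det_Ymat ha hz hl, pow_succ']

theorem Zmat_mulVec_eq_of_forall_Ymat_mulVec {N : ℕ} {x : ℕ → Fin 2 → ℂ}
    (h : ∀ m < N, Ymat a lam z m *ᵥ x m = x (m + 1)) :
    ∀ m ≤ N, Zmat a lam z m *ᵥ x 0 = x m := by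
  intro m hm
  induction m with
  | zero => exact Matrix.one_mulVec _
  | succ m ih => rw [Zmat, ← Matrix.mulVec_mulVec, ih (by omega), h m (by omega)]

variable {q : ℕ}

theorem Ymat_add_period (hq : Even q) (hper : ∀ m : ℤ, a (m + q) = a m ∧ lam (m + q) = lam m)
    (m : ℤ) : Ymat a lam z (m + q) = Ymat a lam z m := by
  have hodd : Odd (m + q) ↔ Odd m := by simp [Int.odd_add, hq.natCast]
  simp only [Ymat, hodd, (hper m).1, (hper m).2]

theorem Zmat_mul_period (hq : Even q) (hper : ∀ m : ℤ, a (m + q) = a m ∧ lam (m + q) = lam m)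
    (n : ℕ) : Zmat a lam z (n * q) = Zmat a lam z q ^ n := by
  have hshift (m : ℕ) : Zmat a lam z (q + m) = Zmat a lam z m * Zmat a lam z q := by
    induction m with
    | zero => simp [Zmat]
    | succ m ih =>
      rw [← add_assoc, Zmat, Zmat, ih, ← mul_assoc, Nat.cast_add, add_comm (q : ℤ),
        Ymat_add_period hq hper]
  induction n with
  | zero => simp [Zmat]
  | succ n ih => rw [add_one_mul, add_comm, hshift, ih, pow_succ]

end Transfer

def Thetamat (α lam : ℂ) : Matrix (Fin 2) (Fin 2) ℂ :=
  lam • !![starRingEnd ℂ α, (rho α : ℂ); (rho α : ℂ), -α]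

theorem Thetamat_mulVec_eq_smul_iff {α lam w : ℂ} (hα : ‖α‖ < 1) (hlam : lam ≠ 0) (hw : w ≠ 0)
    (x y : Fin 2 → ℂ) :
    Thetamat α lam *ᵥ y = w • x ↔ Qmat α lam w *ᵥ ![x 0, y 0] = ![x 1, y 1] := by
  have hρ : (rho α : ℂ) ≠ 0 := by exact_mod_cast (rho_pos hα).ne'
  have hρ2 := rho_sq hα.le
  simp only [Thetamat, Qmat, Matrix.mulVec_fin_two, funext_iff, Fin.forall_fin_two,
    Matrix.smul_apply, Matrix.of_apply, Matrix.cons_val', Matrix.cons_val_zero,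
    Matrix.cons_val_one, Matrix.cons_val_fin_one, Pi.smul_apply, smul_eq_mul]
  field_simp
  constructor
  · rintro ⟨h1, h2⟩
    exact ⟨by linear_combination α * h1 + rho α * h2 - lam * y 0 * hρ2,
      by linear_combination -h1⟩
  · rintro ⟨h1, h2⟩
    refine ⟨by linear_combination -h2, mul_left_cancel₀ hρ ?_⟩
    linear_combination h1 + α * h2 + lam * y 0 * hρ2

theorem Thetamat_mulVec_eq_iff {α lam z : ℂ} (hα : ‖α‖ < 1) (hlam : lam ≠ 0) (x y : Fin 2 → ℂ) :
    Thetamat α lam *ᵥ x = y ↔ Pmat α lam z *ᵥ ![x 0, y 0] = ![x 1, y 1] := by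
  have hρ : (rho α : ℂ) ≠ 0 := by exact_mod_cast (rho_pos hα).ne'
  have hρ2 := rho_sq hα.le
  simp only [Thetamat, Pmat, Matrix.mulVec_fin_two, funext_iff, Fin.forall_fin_two,
    Matrix.smul_apply, Matrix.of_apply, Matrix.cons_val', Matrix.cons_val_zero,
    Matrix.cons_val_one, Matrix.cons_val_fin_one, smul_eq_mul]
  field_simp
  constructor
  · rintro ⟨h1, h2⟩
    exact ⟨by linear_combination -h1,
      by linear_combination α * h1 + rho α * h2 - lam * x 0 * hρ2⟩
  · rintro ⟨h1, h2⟩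
    refine ⟨by linear_combination -h1, mul_left_cancel₀ hρ ?_⟩
    linear_combination α * h1 + h2 + lam * x 0 * hρ2

/-- The coordinates `c + 2j`, `c + 2j + 1` of `ℤ/Nℤ`: the `j`-th block of `ℒ^per` acts on them for
`c = 0`, that of `ℳ^per` for `c = 1`. -/
def pairCoord (N c : ℕ) (j : Fin (N / 2)) (r : Fin 2) : ZMod N :=
  ((c + 2 * (j : ℕ) + r : ℕ) : ZMod N)

theorem pairCoord_bijective {N : ℕ} [NeZero N] (hN : Even N) (c : ℕ) :
    (Function.uncurry (pairCoord N c)).Bijective := by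
  rw [Fintype.bijective_iff_injective_and_card]
  refine ⟨?_, by simp [Nat.div_two_mul_two_of_even hN]⟩
  rintro ⟨j, r⟩ ⟨j', r'⟩ h
  have := ZMod.natCast_injOn_Ico N c (by simp only [Set.mem_Ico]; omega)
    (by simp only [Set.mem_Ico]; omega) h
  dsimp only at this
  simp only [Prod.mk.injEq, Fin.ext_iff]
  omega

section Truncation

variable {a lam : ℤ → ℂ} {w : ℂ} {N : ℕ}

theorem LperMat_eq_sum_blockAt (a lam : ℤ → ℂ) (N : ℕ) :
    LperMat a lam N =
      ∑ j : Fin (N / 2), blockAt (pairCoord N 0 j) (Thetamat (a (2 * j)) (lam (2 * j))) := by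
  rw [LperMat, Finset.sum_range]
  refine Finset.sum_congr rfl fun j _ => ?_
  simp [blockAt, pairCoord, Thetamat, Fin.sum_univ_two, Matrix.single_neg, add_assoc, mul_comm]

theorem MperMat_eq_sum_blockAt (a lam : ℤ → ℂ) (N : ℕ) :
    MperMat a lam N = ∑ j : Fin (N / 2),
      blockAt (pairCoord N 1 j) (Thetamat (a (2 * j + 1)) (lam (2 * j + 1))) := by
  rw [MperMat, Finset.sum_range]
  refine Finset.sum_congr rfl fun j _ => ?_
  simp only [blockAt, pairCoord, Thetamat, Fin.sum_univ_two, Fin.isValue, Fin.coe_ofNat_eq_mod,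
    Nat.zero_mod, Nat.mod_succ, Nat.cast_add, Nat.cast_mul, Nat.cast_ofNat, Nat.cast_one,
    Nat.cast_zero, add_zero, Matrix.smul_apply, Matrix.of_apply, Matrix.cons_val',
    Matrix.cons_val_fin_one, Matrix.cons_val_zero, Matrix.cons_val_one, Matrix.smul_single,
    smul_eq_mul, one_mul, mul_neg, neg_smul, Matrix.single_neg, add_assoc, mul_comm]
  ring_nf

variable [NeZero N]

theorem LperMat_mulVec_eq_smul_iff (hN : Even N) (ha : ∀ m, ‖a m‖ < 1) (hl : ∀ m, lam m ≠ 0)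
    (hw : w ≠ 0) (u v : ZMod N → ℂ) :
    LperMat a lam N *ᵥ v = w • u ↔ ∀ j : Fin (N / 2),
      Ymat a lam w (2 * j : ℕ) *ᵥ ![u (2 * j : ℕ), v (2 * j : ℕ)] =
        ![u (2 * j + 1 : ℕ), v (2 * j + 1 : ℕ)] := by
  rw [LperMat_eq_sum_blockAt, sum_blockAt_mulVec_eq_iff _ (pairCoord_bijective hN 0)]
  refine forall_congr' fun j => ?_
  rw [show (w • u) ∘ pairCoord N 0 j = w • (u ∘ pairCoord N 0 j) from rfl,
    Thetamat_mulVec_eq_smul_iff (ha _) (hl _) hw]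
  simp [pairCoord, Ymat_two_mul]

theorem MperMat_mulVec_eq_iff (hN : Even N) (ha : ∀ m, ‖a m‖ < 1) (hl : ∀ m, lam m ≠ 0)
    (u v : ZMod N → ℂ) :
    MperMat a lam N *ᵥ u = v ↔ ∀ j : Fin (N / 2),
      Ymat a lam w (2 * j + 1 : ℕ) *ᵥ ![u (2 * j + 1 : ℕ), v (2 * j + 1 : ℕ)] =
        ![u (2 * j + 1 + 1 : ℕ), v (2 * j + 1 + 1 : ℕ)] := by
  rw [MperMat_eq_sum_blockAt, sum_blockAt_mulVec_eq_iff _ (pairCoord_bijective hN 1)]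
  refine forall_congr' fun j => ?_
  rw [Thetamat_mulVec_eq_iff (ha _) (hl _) (z := w)]
  simp [pairCoord, Ymat_two_mul_add_one, add_comm 1, add_assoc]

theorem eigenPair_iff_forall_Ymat_mulVec (hN : Even N) (ha : ∀ m, ‖a m‖ < 1)
    (hl : ∀ m, lam m ≠ 0) (hw : w ≠ 0) (u v : ZMod N → ℂ) :
    LperMat a lam N *ᵥ v = w • u ∧ MperMat a lam N *ᵥ u = v ↔
      ∀ m < N, Ymat a lam w m *ᵥ ![u m, v m] = ![u (m + 1 : ℕ), v (m + 1 : ℕ)] := by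
  rw [LperMat_mulVec_eq_smul_iff hN ha hl hw, MperMat_mulVec_eq_iff hN ha hl,
    forall_lt_iff_forall_two_mul hN]

theorem mem_spectrum_EperMat_iff (hN : Even N) (ha : ∀ m, ‖a m‖ < 1) (hl : ∀ m, lam m ≠ 0)
    (hw : w ≠ 0) : w ∈ spectrum ℂ (EperMat a lam N) ↔ 1 ∈ spectrum ℂ (Zmat a lam w N) := by
  simp only [Matrix.mem_spectrum_iff_exists_mulVec_eq_smul, one_smul]
  constructor
  · rintro ⟨u, hu, hE⟩
    set v := MperMat a lam N *ᵥ u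
    have hstep := (eigenPair_iff_forall_Ymat_mulVec hN ha hl hw u v).1
      ⟨by rw [Matrix.mulVec_mulVec]; exact hE, rfl⟩
    have horbit := Zmat_mulVec_eq_of_forall_Ymat_mulVec hstep
    refine ⟨![u 0, v 0], fun h0 => hu (funext fun k => ?_), ?_⟩
    · have := congrFun (horbit k.val k.val_lt.le) 0
      simpa [h0, eq_comm] using this
    · simpa using horbit N le_rfl
  · rintro ⟨x, hx, hZ⟩
    set y := fun m : ℕ => Zmat a lam w m *ᵥ x
    set u := fun k : ZMod N => y k.val 0
    set v := fun k : ZMod N => y k.val 1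
    have hy0 : y 0 = x := Matrix.one_mulVec x
    have hy : ∀ m ≤ N, ![u m, v m] = y m := by
      intro m hm
      have hval : y (m : ZMod N).val = y m := by
        rcases hm.lt_or_eq with hm | rfl
        · rw [ZMod.val_cast_of_lt hm]
        · rw [ZMod.natCast_self, ZMod.val_zero, hy0]; exact hZ.symm
      show ![y (m : ZMod N).val 0, y (m : ZMod N).val 1] = y m
      rw [hval]
      ext i; fin_cases i <;> rfl
    have hstep : ∀ m < N, Ymat a lam w m *ᵥ ![u m, v m] = ![u (m + 1 : ℕ), v (m + 1 : ℕ)] := by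
      intro m hm
      rw [hy m hm.le, hy (m + 1) hm, Matrix.mulVec_mulVec]
      rfl
    obtain ⟨hL, hM⟩ := (eigenPair_iff_forall_Ymat_mulVec hN ha hl hw u v).2 hstep
    refine ⟨u, fun hu => hx ?_, by rw [EperMat, ← Matrix.mulVec_mulVec, hM, hL]⟩
    have hv : v = 0 := by rw [← hM, hu, Matrix.mulVec_zero]
    rw [← hy0, ← hy 0 (Nat.zero_le N), hu, hv]
    simp

end Truncation

theorem periodic_truncation_eigenvalues_general
    (q : ℕ) (hq : Even q) (a lam : ℤ → ℂ)
    (ha : ∀ m, ‖a m‖ < 1) (hl : ∀ m, ‖lam m‖ = 1)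
    (hper : ∀ m : ℤ, a (m + q) = a m ∧ lam (m + q) = lam m)
    (n : ℕ) (hn : 0 < n) [NeZero (n * q)]
    (w : ℂ) (hw : w ≠ 0) :
    (w ∈ spectrum ℂ (EperMat a lam (n * q)) ↔
      (1 : ℂ) ∈ spectrum ℂ (Zmat a lam w q ^ n)) ∧
    (w ∈ spectrum ℂ (EperMat a lam (n * q)) ↔
      ∃ j : ℕ, 2 * j ≤ n ∧
        (Zmat a lam w q).trace =
          Complex.ofReal (2 * Real.cos (2 * Real.pi * j / n))) := by
  have hl0 (m : ℤ) : lam m ≠ 0 := norm_ne_zero_iff.mp (by rw [hl m]; exact one_ne_zero)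
  have hdet : (Zmat a lam w q).det = 1 := by rw [det_Zmat ha hw hl0, hq.neg_one_pow]
  have hspec : w ∈ spectrum ℂ (EperMat a lam (n * q)) ↔
      1 ∈ spectrum ℂ (Zmat a lam w q ^ n) := by
    rw [mem_spectrum_EperMat_iff (hq.mul_left n) ha hl0 hw, Zmat_mul_period hq hper]
  refine ⟨hspec, ?_⟩
  rw [hspec, one_mem_spectrum_pow_iff_exists_trace_eq_two_cos hdet hn,
    exists_lt_two_cos_iff_exists_two_mul_le hn]

/-- eigenvalues of periodic truncations. For (α,λ) q-periodic (q even)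
and N = nq, a nonzero w is an eigenvalue of ℰ^per_N iff 1 is an eigenvalue of Φ(w)ⁿ,
iff Δ(w) = 2cos(2πj/n) for some integer 0 ≤ j ≤ n/2. -/
theorem periodic_truncation_eigenvalues
    (q : ℕ) (hq : Even q) (hq0 : 0 < q) (a lam : ℤ → ℂ)
    (ha : ∀ m, ‖a m‖ < 1) (hl : ∀ m, ‖lam m‖ = 1)
    (hper : ∀ m : ℤ, a (m + q) = a m ∧ lam (m + q) = lam m)
    (n : ℕ) (hn : 0 < n) [NeZero (n * q)]
    (w : ℂ) (hw : w ≠ 0) :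
    (w ∈ spectrum ℂ (EperMat a lam (n * q)) ↔
      (1 : ℂ) ∈ spectrum ℂ (Zmat a lam w q ^ n)) ∧
    (w ∈ spectrum ℂ (EperMat a lam (n * q)) ↔
      ∃ j : ℕ, 2 * j ≤ n ∧
        (Zmat a lam w q).trace =
          Complex.ofReal (2 * Real.cos (2 * Real.pi * j / n))) :=
  periodic_truncation_eigenvalues_general q hq a lam ha hl hper n hn w hw
end
end
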